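/- The set of primes is partitioned by the principal Eratosthenes rays: the family { r(a) : a = 1 or a composite } consists of pairwise disjoint sets whose union is exactly the set of all primes, where r(a) = { e(a,k) : k ≥ 1 } and e iterates m ↦ p_m. -/

import Mathlib

/-!
`m ↦ p_m` is a bijection from the positive integers onto the primes with `p_m > m`.
So every prime `q` has a unique predecessor `π q < q`, and following predecessors from `q`
descends until it leaves the primes at a base that is `1` or composite; this base and the
number of steps are determined by `q`, which gives both the covering and the disjointness.
-/

open Nat

/-- The n-th prime number, 1-indexed: `nthPrime 1 = 2`. -/
noncomputable def nthPrime (n : ℕ) : ℕ := Nat.nth Nat.Prime (n - 1)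


/-- The Eratosthenes progression of base `a`: `erat a 0 = a`,
`erat a (k+1) = nthPrime (erat a k)`. -/
noncomputable def erat (a : ℕ) : ℕ → ℕ
  | 0 => a
  | k + 1 => nthPrime (erat a k)


/-- The Eratosthenes ray of base `a`: the set of all iterates `erat a k` for `k ≥ 1`. -/
noncomputable def ray (a : ℕ) : Set ℕ := {m | ∃ k, 1 ≤ k ∧ erat a k = m}

lemma nthPrime_prime (n : ℕ) : (nthPrime n).Prime :=
  prime_nth_prime _

lemma nthPrime_injOn : Set.InjOn nthPrime {n | 1 ≤ n} := by
  intro m (hm : 1 ≤ m) n (hn : 1 ≤ n) h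
  have := nth_injective infinite_setOfPred_prime h
  omega

lemma lt_nthPrime {n : ℕ} (hn : 1 ≤ n) : n < nthPrime n := by
  have := add_two_le_nth_prime (n - 1)
  unfold nthPrime
  omega

open scoped Nat.Prime

lemma nthPrime_primeCounting {q : ℕ} (hq : q.Prime) : nthPrime (π q) = q := by
  rw [nthPrime, primeCounting, primeCounting', count_succ, if_pos hq, add_tsub_cancel_right]
  exact nth_count hq

lemma one_le_primeCounting {q : ℕ} (hq : q.Prime) : 1 ≤ π q := by
  simpa [Nat.one_le_iff_ne_zero] using hq.one_lt

lemma erat_prime (a : ℕ) {k : ℕ} (hk : 1 ≤ k) : (erat a k).Prime := by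
  obtain ⟨k, rfl⟩ := exists_add_of_le hk
  rw [add_comm]
  exact nthPrime_prime _

lemma one_le_erat {a : ℕ} (ha : 1 ≤ a) : ∀ k, 1 ≤ erat a k
  | 0 => ha
  | _ + 1 => (erat_prime a le_add_self).one_lt.le

lemma erat_eq_erat {a b : ℕ} (ha : 1 ≤ a) (ha' : ¬ a.Prime) (hb : 1 ≤ b) (hb' : ¬ b.Prime) :
    ∀ {k l : ℕ}, erat a k = erat b l → a = b ∧ k = l
  | 0, 0, h => ⟨h, rfl⟩
  | 0, _ + 1, h => ha'.elim (h ▸ erat_prime b le_add_self : (erat a 0).Prime)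
  | _ + 1, 0, h => hb'.elim (h ▸ erat_prime a le_add_self : (erat b 0).Prime)
  | _ + 1, _ + 1, h => by
    obtain ⟨hab, hkl⟩ :=
      erat_eq_erat ha ha' hb hb' (nthPrime_injOn (one_le_erat ha _) (one_le_erat hb _) h)
    exact ⟨hab, congrArg (· + 1) hkl⟩

lemma disjoint_ray {a b : ℕ} (ha : 1 ≤ a) (ha' : ¬ a.Prime) (hb : 1 ≤ b) (hb' : ¬ b.Prime)
    (hab : a ≠ b) : Disjoint (ray a) (ray b) := by
  rw [Set.disjoint_left]
  rintro q ⟨k, -, rfl⟩ ⟨l, -, hl⟩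
  exact hab (erat_eq_erat ha ha' hb hb' hl.symm).1

lemma prime_of_mem_ray {a q : ℕ} (hq : q ∈ ray a) : q.Prime := by
  obtain ⟨k, hk, rfl⟩ := hq
  exact erat_prime a hk

lemma exists_mem_ray_of_prime {q : ℕ} (hq : q.Prime) :
    ∃ a, (1 ≤ a ∧ ¬ a.Prime) ∧ q ∈ ray a := by
  induction q using Nat.strong_induction_on with
  | _ q ih =>
    have hm := one_le_primeCounting hq
    have hmq := nthPrime_primeCounting hq
    by_cases hp : (π q).Prime
    · obtain ⟨a, ha, k, hk, hka⟩ := ih _ ((lt_nthPrime hm).trans_eq hmq) hp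
      exact ⟨a, ha, k + 1, le_add_self, by rw [erat, hka, hmq]⟩
    · exact ⟨π q, ⟨hm, hp⟩, 1, le_rfl, hmq⟩

theorem primes_partitioned_by_principal_rays :
    (∀ a b : ℕ, (1 ≤ a ∧ ¬ a.Prime) → (1 ≤ b ∧ ¬ b.Prime) → a ≠ b →
      Disjoint (ray a) (ray b)) ∧
    (⋃ a ∈ {a : ℕ | 1 ≤ a ∧ ¬ a.Prime}, ray a) = {q : ℕ | q.Prime} := by
  refine ⟨fun a b ha hb hab => disjoint_ray ha.1 ha.2 hb.1 hb.2 hab, ?_⟩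
  ext q
  simp only [Set.mem_iUnion, Set.mem_ofPred_eq, exists_prop]
  exact ⟨fun ⟨_, _, hq⟩ => prime_of_mem_ray hq, exists_mem_ray_of_prime⟩
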